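/- arXiv:2308.05091 — 2 statements merged into one kernel-verified Lean document; each statement's English description precedes it below -/
import Mathlib

section
/- In the deterministic multistage linear program setting, assume that every cost-to-go function Q_t takes the value -\infty nowhere. Then for each t = 1,\dots,T+1 the epigraph of Q_t, \{(x, r) \in \mathbb{R}^{N_x} \times \mathbb{R} : Q_t(x) \le r\}, is a polyhedral set, i.e., it is the intersection of finitely many closed affine half-spaces of \mathbb{R}^{N_x} \times \mathbb{R}; equivalently, Q_t is piecewise linear: on its effective domain it is the pointwise maximum of finitely many affine functions. -/
open Matrix

namespace SDDPAux

noncomputable section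

set_option linter.unusedSectionVars false

variable {ι : Type} [Fintype ι]

/-- Extend a vector by one extra coordinate (at `none`). -/
def extendO (x : ι → ℝ) (t : ℝ) : Option ι → ℝ := fun o => o.elim t x

@[simp] lemma extendO_some (x : ι → ℝ) (t : ℝ) (j : ι) : extendO x t (some j) = x j := rfl
@[simp] lemma extendO_none (x : ι → ℝ) (t : ℝ) : extendO x t none = t := rfl

/-- A set is polyhedral if it is a finite intersection of closed half-spaces. -/
def IsPoly (S : Set (ι → ℝ)) : Prop :=
  ∃ (n : ℕ) (f : Fin n → ((ι → ℝ) →ₗ[ℝ] ℝ)) (b : Fin n → ℝ),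
    S = {x | ∀ i, f i x ≤ b i}

lemma isPoly_family {κ : Type} [Fintype κ] (f : κ → ((ι → ℝ) →ₗ[ℝ] ℝ)) (b : κ → ℝ) :
    IsPoly {x | ∀ k, f k x ≤ b k} := by
  classical
  refine ⟨Fintype.card κ, f ∘ (Fintype.equivFin κ).symm, b ∘ (Fintype.equivFin κ).symm, ?_⟩
  ext x
  constructor
  · intro h i; exact h _
  · intro h k
    have := h (Fintype.equivFin κ k)
    simpa using this

lemma IsPoly.inter {S₁ S₂ : Set (ι → ℝ)} (h₁ : IsPoly S₁) (h₂ : IsPoly S₂) :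
    IsPoly (S₁ ∩ S₂) := by
  obtain ⟨n₁, f₁, b₁, rfl⟩ := h₁
  obtain ⟨n₂, f₂, b₂, rfl⟩ := h₂
  have : ({x | ∀ i, f₁ i x ≤ b₁ i} ∩ {x | ∀ i, f₂ i x ≤ b₂ i} : Set (ι → ℝ))
      = {x | ∀ k : Fin n₁ ⊕ Fin n₂, Sum.elim f₁ f₂ k x ≤ Sum.elim b₁ b₂ k} := by
    ext x
    simp [Sum.forall, Set.mem_inter_iff]
  rw [this]
  exact isPoly_family _ _

lemma IsPoly.preimage {κ : Type} [Fintype κ] {S : Set (ι → ℝ)} (h : IsPoly S)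
    (L : (κ → ℝ) →ₗ[ℝ] (ι → ℝ)) : IsPoly {x | L x ∈ S} := by
  obtain ⟨n, f, b, rfl⟩ := h
  exact ⟨n, fun i => (f i).comp L, b, rfl⟩

lemma exists_between_finsets (L U : Finset ℝ) (h : ∀ l ∈ L, ∀ u ∈ U, l ≤ u) :
    ∃ t : ℝ, (∀ l ∈ L, l ≤ t) ∧ (∀ u ∈ U, t ≤ u) := by
  rcases L.eq_empty_or_nonempty with hL | hL
  · rcases U.eq_empty_or_nonempty with hU | hU
    · exact ⟨0, by simp [hL], by simp [hU]⟩
    · exact ⟨U.min' hU, by simp [hL], fun u hu => U.min'_le u hu⟩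
  · exact ⟨L.max' hL, fun l hl => L.le_max' l hl,
      fun u hu => Finset.max'_le _ _ _ (fun l hl => h l hl u hu)⟩

lemma le_of_forall_pos_add_mul {a b c : ℝ} (h : ∀ ε : ℝ, 0 < ε → a + ε * c ≤ b) : a ≤ b := by
  by_contra hab
  push_neg at hab
  set ε := (a - b) / (2 * (|c| + 1)) with hεdef
  have hc1 : (0:ℝ) < |c| + 1 := by positivity
  have hε : 0 < ε := div_pos (by linarith) (by positivity)
  have h1 := h ε hε
  have h2 : ε * (-|c|) ≤ ε * c := mul_le_mul_of_nonneg_left (neg_abs_le c) hε.le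
  have h3 : ε * (|c| + 1) = (a - b) / 2 := by
    rw [hεdef]
    field_simp
  nlinarith [abs_nonneg c]

/-- Fourier–Motzkin elimination of one variable. -/
lemma projOption {S : Set (Option ι → ℝ)} (hS : IsPoly S) :
    IsPoly {x : ι → ℝ | ∃ t : ℝ, extendO x t ∈ S} := by
  classical
  obtain ⟨n, f, b, rfl⟩ := hS
  set extL : (ι → ℝ) →ₗ[ℝ] (Option ι → ℝ) :=
    LinearMap.pi (fun o => Option.elim o 0 (fun j => LinearMap.proj j)) with hextL
  have hextL_apply : ∀ (x : ι → ℝ), extL x = extendO x 0 := by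
    intro x; funext o; cases o <;> rfl
  set g : Fin n → ((ι → ℝ) →ₗ[ℝ] ℝ) := fun i => (f i).comp extL with hg
  set α : Fin n → ℝ := fun i => f i (Pi.single none 1) with hα
  have hdec : ∀ (i : Fin n) (x : ι → ℝ) (t : ℝ), f i (extendO x t) = g i x + t * α i := by
    intro i x t
    have hsplit : extendO x t
        = extL x + t • (Pi.single (none : Option ι) (1:ℝ) : Option ι → ℝ) := by
      funext o
      cases o with
      | none => simp [hextL_apply, extendO]
      | some j => simp [hextL_apply, extendO]
    rw [hsplit, map_add, _root_.map_smul, smul_eq_mul, hextL_apply]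
    have : f i (extendO x 0) = g i x := by rw [hg]; simp [hextL_apply]
    rw [this]
  have key : {x : ι → ℝ | ∃ t : ℝ, extendO x t ∈ {w | ∀ i, f i w ≤ b i}}
      = {x : ι → ℝ | ∀ k : Fin n ⊕ Fin n × Fin n,
          (Sum.elim (fun i => if α i = 0 then g i else 0)
            (fun ij => if α ij.1 < 0 ∧ 0 < α ij.2
              then α ij.2 • g ij.1 - α ij.1 • g ij.2 else 0) k) x ≤
          (Sum.elim (fun i => if α i = 0 then b i else 0)
            (fun ij => if α ij.1 < 0 ∧ 0 < α ij.2
              then α ij.2 * b ij.1 - α ij.1 * b ij.2 else 0) k)} := by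
    ext x
    simp only [Set.mem_setOf_eq]
    constructor
    · rintro ⟨t, ht⟩ k
      have ht' : ∀ i, g i x + t * α i ≤ b i := by
        intro i; rw [← hdec]; exact ht i
      cases k with
      | inl i =>
        by_cases h0 : α i = 0
        · simp only [Sum.elim_inl, if_pos h0]
          have := ht' i; rw [h0] at this; linarith
        · simp [h0]
      | inr ij =>
        obtain ⟨i, j⟩ := ij
        by_cases hsgn : α i < 0 ∧ 0 < α j
        · simp only [Sum.elim_inr, if_pos hsgn, LinearMap.sub_apply, LinearMap.smul_apply,
            smul_eq_mul]
          obtain ⟨hi, hj⟩ := hsgn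
          nlinarith [mul_le_mul_of_nonneg_left (ht' i) hj.le,
            mul_le_mul_of_nonneg_right (ht' j) (neg_nonneg.mpr hi.le)]
        · simp [hsgn]
    · intro hF
      set L : Finset ℝ :=
        (Finset.univ.filter (fun i => α i < 0)).image (fun i => (b i - g i x) / α i) with hL
      set U : Finset ℝ :=
        (Finset.univ.filter (fun i => 0 < α i)).image (fun i => (b i - g i x) / α i) with hU
      have hLU : ∀ l ∈ L, ∀ u ∈ U, l ≤ u := by
        intro l hl u hu
        rw [hL, Finset.mem_image] at hl
        rw [hU, Finset.mem_image] at hu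
        obtain ⟨i, hi, rfl⟩ := hl
        obtain ⟨j, hj, rfl⟩ := hu
        rw [Finset.mem_filter] at hi hj
        have hi' := hi.2
        have hj' := hj.2
        have hk := hF (Sum.inr (i, j))
        simp only [Sum.elim_inr] at hk
        rw [if_pos (show α i < 0 ∧ 0 < α j from ⟨hi', hj'⟩),
          if_pos (show α i < 0 ∧ 0 < α j from ⟨hi', hj'⟩)] at hk
        simp only [LinearMap.sub_apply, LinearMap.smul_apply, smul_eq_mul] at hk
        have e1 : (b i - g i x) / α i = (g i x - b i) / (-α i) := by
          rw [← neg_div_neg_eq]; ring_nf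
        rw [e1, div_le_div_iff₀ (by linarith) hj']
        nlinarith [hk]
      obtain ⟨t, htL, htU⟩ := exists_between_finsets L U hLU
      refine ⟨t, fun i => ?_⟩
      rw [hdec]
      rcases lt_trichotomy (α i) 0 with hneg | hzero | hpos
      · have hmem : (b i - g i x) / α i ∈ L := by
          rw [hL, Finset.mem_image]
          exact ⟨i, Finset.mem_filter.mpr ⟨Finset.mem_univ i, hneg⟩, rfl⟩
        have h1 := htL _ hmem
        have h2 := mul_le_mul_of_nonpos_right h1 hneg.le
        rw [div_mul_cancel₀ _ hneg.ne] at h2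
        linarith
      · have hk := hF (Sum.inl i)
        simp only [Sum.elim_inl] at hk
        rw [if_pos hzero, if_pos hzero] at hk
        rw [hzero]
        linarith
      · have hmem : (b i - g i x) / α i ∈ U := by
          rw [hU, Finset.mem_image]
          exact ⟨i, Finset.mem_filter.mpr ⟨Finset.mem_univ i, hpos⟩, rfl⟩
        have h1 := htU _ hmem
        have h2 := mul_le_mul_of_nonneg_right h1 hpos.le
        rw [div_mul_cancel₀ _ hpos.ne'] at h2
        linarith
  rw [key]
  exact isPoly_family _ _

def chi (ι : Type) (m : ℕ) : ι ⊕ Fin (m + 1) → Option (ι ⊕ Fin m)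
  | Sum.inl i => some (Sum.inl i)
  | Sum.inr j => Fin.lastCases none (fun j' => some (Sum.inr j')) j

lemma chi_extend (m : ℕ) (v : ι → ℝ) (u : Fin m → ℝ) (t : ℝ) :
    extendO (Sum.elim v u) t ∘ chi ι m = Sum.elim v (Fin.snoc u t) := by
  funext z
  cases z with
  | inl i => rfl
  | inr j =>
    induction j using Fin.lastCases with
    | last => simp [chi, extendO, Fin.snoc_last]
    | cast j' => simp [chi, extendO, Fin.snoc_castSucc]

lemma projFin : ∀ (m : ℕ) (S : Set (ι ⊕ Fin m → ℝ)), IsPoly S →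
    IsPoly {v : ι → ℝ | ∃ u : Fin m → ℝ, Sum.elim v u ∈ S} := by
  intro m
  induction m with
  | zero =>
    intro S hS
    have hset : {v : ι → ℝ | ∃ u : Fin 0 → ℝ, Sum.elim v u ∈ S}
        = {v : ι → ℝ | (LinearMap.funLeft ℝ ℝ (Sum.elim id Fin.elim0 : ι ⊕ Fin 0 → ι)) v ∈ S} := by
      ext v
      simp only [Set.mem_setOf_eq, LinearMap.funLeft_apply]
      constructor
      · rintro ⟨u, hu⟩
        convert hu using 1
        funext z
        cases z with
        | inl i => rfl
        | inr j => exact j.elim0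
      · intro h
        refine ⟨Fin.elim0, ?_⟩
        convert h using 1
        funext z
        cases z with
        | inl i => rfl
        | inr j => exact j.elim0
    rw [hset]
    exact hS.preimage _
  | succ m ih =>
    intro S hS
    have hS'' : IsPoly {z : Option (ι ⊕ Fin m) → ℝ |
        (LinearMap.funLeft ℝ ℝ (chi ι m)) z ∈ S} := hS.preimage _
    have hT : IsPoly {w : ι ⊕ Fin m → ℝ | ∃ t : ℝ, extendO w t ∈
        {z : Option (ι ⊕ Fin m) → ℝ | (LinearMap.funLeft ℝ ℝ (chi ι m)) z ∈ S}} :=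
      projOption hS''
    have hset : {v : ι → ℝ | ∃ u : Fin (m + 1) → ℝ, Sum.elim v u ∈ S}
        = {v : ι → ℝ | ∃ u : Fin m → ℝ, Sum.elim v u ∈
            {w : ι ⊕ Fin m → ℝ | ∃ t : ℝ, extendO w t ∈
              {z : Option (ι ⊕ Fin m) → ℝ | (LinearMap.funLeft ℝ ℝ (chi ι m)) z ∈ S}}} := by
      ext v
      simp only [Set.mem_setOf_eq, LinearMap.funLeft_apply]
      constructor
      · rintro ⟨u, hu⟩
        refine ⟨Fin.init u, u (Fin.last m), ?_⟩
        show extendO (Sum.elim v (Fin.init u)) (u (Fin.last m)) ∘ chi ι m ∈ S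
        rw [chi_extend, Fin.snoc_init_self]
        exact hu
      · rintro ⟨u, t, hu⟩
        refine ⟨Fin.snoc u t, ?_⟩
        rw [← chi_extend]
        exact hu
    rw [hset]
    exact ih _ hT

lemma projSum {κ : Type} [Fintype κ] {S : Set (ι ⊕ κ → ℝ)} (hS : IsPoly S) :
    IsPoly {v : ι → ℝ | ∃ u : κ → ℝ, Sum.elim v u ∈ S} := by
  classical
  set e := Fintype.equivFin κ with he
  have hS' : IsPoly {w : ι ⊕ Fin (Fintype.card κ) → ℝ |
      (LinearMap.funLeft ℝ ℝ (Sum.map id e)) w ∈ S} := hS.preimage _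
  have hset : {v : ι → ℝ | ∃ u : κ → ℝ, Sum.elim v u ∈ S}
      = {v : ι → ℝ | ∃ u' : Fin (Fintype.card κ) → ℝ, Sum.elim v u' ∈
          {w : ι ⊕ Fin (Fintype.card κ) → ℝ | (LinearMap.funLeft ℝ ℝ (Sum.map id e)) w ∈ S}} := by
    ext v
    simp only [Set.mem_setOf_eq, LinearMap.funLeft_apply]
    constructor
    · rintro ⟨u, hu⟩
      refine ⟨u ∘ e.symm, ?_⟩
      show Sum.elim v (u ∘ e.symm) ∘ Sum.map id e ∈ S
      convert hu using 1
      funext z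
      cases z with
      | inl i => rfl
      | inr k => simp
    · rintro ⟨u', hu'⟩
      refine ⟨u' ∘ e, ?_⟩
      convert hu' using 1
      funext z
      cases z with
      | inl i => rfl
      | inr k => rfl
  rw [hset]
  exact projFin _ _ hS'

/-- Dot product with a fixed vector, as a linear map. -/
def dotL (v : ι → ℝ) : (ι → ℝ) →ₗ[ℝ] ℝ := ∑ j, v j • LinearMap.proj j

lemma dotL_apply (v x : ι → ℝ) : dotL v x = v ⬝ᵥ x := by
  simp [dotL, dotProduct, LinearMap.sum_apply]

/-- One backwards step: if the epigraph of `Qn` is polyhedral and `Qt` is the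
Bellman image of `Qn`, then the epigraph of `Qt` is polyhedral. -/
lemma step_poly (Nx Np qt : ℕ) (At : Matrix (Fin Nx) (Fin Nx) ℝ)
    (Bt : Matrix (Fin Nx) (Fin Np) ℝ) (Et : Matrix (Fin qt) (Fin Nx) ℝ)
    (Ft : Matrix (Fin qt) (Fin Np) ℝ) (ct : Fin Np → ℝ) (dt : Fin Nx → ℝ)
    (et : Fin qt → ℝ) (Qt Qn : (Fin Nx → ℝ) → EReal)
    (hrec : ∀ x, Qt x = sInf { v : EReal | ∃ (y : Fin Nx → ℝ) (p : Fin Np → ℝ),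
        y = At *ᵥ x + Bt *ᵥ p + dt ∧ et ≤ Et *ᵥ y + Ft *ᵥ p ∧
        v = ((ct ⬝ᵥ p : ℝ) : EReal) + Qn y })
    (hbot : ∀ y, Qn y ≠ ⊥)
    (hpoly : IsPoly {w : Option (Fin Nx) → ℝ | Qn (fun j => w (some j)) ≤ ((w none : ℝ) : EReal)}) :
    IsPoly {w : Option (Fin Nx) → ℝ | Qt (fun j => w (some j)) ≤ ((w none : ℝ) : EReal)} := by
  classical
  obtain ⟨n', f', b', hfb'⟩ := hpoly
  set W := (Option (Fin Nx)) ⊕ (Option (Fin Np)) with hW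
  set xm : (W → ℝ) →ₗ[ℝ] (Fin Nx → ℝ) :=
    LinearMap.funLeft ℝ ℝ (fun j => Sum.inl (some j)) with hxm
  set pm : (W → ℝ) →ₗ[ℝ] (Fin Np → ℝ) :=
    LinearMap.funLeft ℝ ℝ (fun j => Sum.inr (some j)) with hpm
  set rm : (W → ℝ) →ₗ[ℝ] ℝ := LinearMap.proj (Sum.inl none) with hrm
  set r'm : (W → ℝ) →ₗ[ℝ] ℝ := LinearMap.proj (Sum.inr none) with hr'm
  set ylin : (W → ℝ) →ₗ[ℝ] (Fin Nx → ℝ) :=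
    At.mulVecLin ∘ₗ xm + Bt.mulVecLin ∘ₗ pm with hylin
  have hylin_apply : ∀ w : W → ℝ,
      ylin w = At *ᵥ (fun j => w (Sum.inl (some j))) + Bt *ᵥ (fun j => w (Sum.inr (some j))) := by
    intro w
    rw [hylin]
    simp only [LinearMap.add_apply, LinearMap.comp_apply, Matrix.mulVecLin_apply]
    rfl
  set Lw : (W → ℝ) →ₗ[ℝ] (Option (Fin Nx) → ℝ) :=
    LinearMap.pi (fun o => Option.elim o r'm (fun j => LinearMap.proj j ∘ₗ ylin)) with hLw
  have hLw_apply : ∀ (w : W → ℝ) (o : Option (Fin Nx)),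
      Lw w o = Option.elim o (w (Sum.inr none)) (fun j => ylin w j) := by
    intro w o
    cases o with
    | none => rfl
    | some j => rfl
  set P1 : Set (W → ℝ) := {w | ∀ i : Fin qt,
    (-(LinearMap.proj i ∘ₗ (Et.mulVecLin ∘ₗ ylin + Ft.mulVecLin ∘ₗ pm))) w
      ≤ (Et *ᵥ dt) i - et i} with hP1def
  set P2 : Set (W → ℝ) := {w | ∀ i : Fin n',
    (f' i ∘ₗ Lw) w ≤ b' i - f' i (extendO dt 0)} with hP2def
  set P3 : Set (W → ℝ) := {w | ∀ _i : Fin 1,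
    (dotL ct ∘ₗ pm + r'm - rm) w ≤ (0:ℝ)} with hP3def
  set P : Set (W → ℝ) := P1 ∩ (P2 ∩ P3) with hPdef
  have hPpoly : IsPoly P :=
    (isPoly_family _ _).inter ((isPoly_family _ _).inter (isPoly_family _ _))
  have hmemP : ∀ w : W → ℝ,
      w ∈ P ↔
        (et ≤ Et *ᵥ (At *ᵥ (fun j => w (Sum.inl (some j)))
            + Bt *ᵥ (fun j => w (Sum.inr (some j))) + dt)
          + Ft *ᵥ (fun j => w (Sum.inr (some j)))) ∧
        (Qn (At *ᵥ (fun j => w (Sum.inl (some j)))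
            + Bt *ᵥ (fun j => w (Sum.inr (some j))) + dt)
          ≤ ((w (Sum.inr none) : ℝ) : EReal)) ∧
        ((ct ⬝ᵥ (fun j => w (Sum.inr (some j)))) + w (Sum.inr none) ≤ w (Sum.inl none)) := by
    intro w
    set x : Fin Nx → ℝ := fun j => w (Sum.inl (some j)) with hx
    set p : Fin Np → ℝ := fun j => w (Sum.inr (some j)) with hp
    set y : Fin Nx → ℝ := At *ᵥ x + Bt *ᵥ p + dt with hy
    have hyl : ylin w = At *ᵥ x + Bt *ᵥ p := hylin_apply w
    have hpmw : pm w = p := rfl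
    have hrmw : rm w = w (Sum.inl none) := rfl
    have hr'mw : r'm w = w (Sum.inr none) := rfl
    have hEy : ∀ i, (Et *ᵥ y) i = (Et *ᵥ (ylin w)) i + (Et *ᵥ dt) i := by
      intro i
      have : Et *ᵥ y = Et *ᵥ (ylin w) + Et *ᵥ dt := by
        rw [hy, ← hyl, Matrix.mulVec_add]
      rw [this, Pi.add_apply]
    have c1 : w ∈ P1 ↔ et ≤ Et *ᵥ y + Ft *ᵥ p := by
      rw [hP1def, Set.mem_setOf_eq, Pi.le_def]
      apply forall_congr'
      intro i
      simp only [LinearMap.neg_apply, LinearMap.comp_apply, LinearMap.add_apply,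
        Matrix.mulVecLin_apply, LinearMap.proj_apply, Pi.add_apply, hpmw]
      have h1 := hEy i
      constructor
      · intro h; linarith
      · intro h; linarith
    have hext : extendO y (w (Sum.inr none)) = Lw w + extendO dt 0 := by
      funext o
      cases o with
      | none => simp [extendO, hLw_apply]
      | some j =>
        simp only [Pi.add_apply, extendO, Option.elim, hLw_apply]
        rw [hy, hyl]
        simp [Pi.add_apply]
    have c2 : w ∈ P2 ↔ Qn y ≤ ((w (Sum.inr none) : ℝ) : EReal) := by
      rw [hP2def, Set.mem_setOf_eq]
      have e2 : ∀ i : Fin n', (f' i ∘ₗ Lw) w ≤ b' i - f' i (extendO dt 0)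
          ↔ f' i (extendO y (w (Sum.inr none))) ≤ b' i := by
        intro i
        rw [hext, map_add, LinearMap.comp_apply]
        constructor
        · intro h; linarith
        · intro h; linarith
      rw [forall_congr' e2]
      have : (∀ i : Fin n', f' i (extendO y (w (Sum.inr none))) ≤ b' i)
          ↔ extendO y (w (Sum.inr none)) ∈ {v : Option (Fin Nx) → ℝ | ∀ i, f' i v ≤ b' i} :=
        Iff.rfl
      rw [this, ← hfb']
      exact Iff.rfl
    have c3 : w ∈ P3 ↔ (ct ⬝ᵥ p) + w (Sum.inr none) ≤ w (Sum.inl none) := by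
      rw [hP3def, Set.mem_setOf_eq]
      constructor
      · intro h
        have := h 0
        simp only [LinearMap.sub_apply, LinearMap.add_apply, LinearMap.comp_apply,
          LinearMap.proj_apply, dotL_apply, hpmw, hrmw, hr'mw] at this
        linarith
      · intro h _i
        simp only [LinearMap.sub_apply, LinearMap.add_apply, LinearMap.comp_apply,
          LinearMap.proj_apply, dotL_apply, hpmw, hrmw, hr'mw]
        linarith
    rw [hPdef, Set.mem_inter_iff, Set.mem_inter_iff, c1, c2, c3]
  -- the projected polyhedron
  have hSpoly : IsPoly {v : Option (Fin Nx) → ℝ | ∃ u : Option (Fin Np) → ℝ,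
      Sum.elim v u ∈ P} := projSum hPpoly
  obtain ⟨m, Fs, βs, hSrep⟩ := hSpoly
  have hmain : {w : Option (Fin Nx) → ℝ | Qt (fun j => w (some j)) ≤ ((w none : ℝ) : EReal)}
      = {v : Option (Fin Nx) → ℝ | ∃ u : Option (Fin Np) → ℝ, Sum.elim v u ∈ P} := by
    ext v
    simp only [Set.mem_setOf_eq]
    constructor
    · intro hv
      suffices hgoal : v ∈ {x | ∀ i, Fs i x ≤ βs i} by
        rw [← hSrep] at hgoal
        exact hgoal
      show ∀ i, Fs i v ≤ βs i
      intro i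
      apply le_of_forall_pos_add_mul (c := Fs i (Pi.single (none : Option (Fin Nx)) 1))
      intro ε hε
      have hv' : (v + ε • (Pi.single (none : Option (Fin Nx)) (1:ℝ) : Option (Fin Nx) → ℝ))
          ∈ {x | ∀ i, Fs i x ≤ βs i} := by
        rw [← hSrep]
        set v' := v + ε • (Pi.single (none : Option (Fin Nx)) (1:ℝ) : Option (Fin Nx) → ℝ)
          with hv'def
        have hv'some : ∀ j, v' (some j) = v (some j) := by
          intro j
          simp [hv'def, Pi.single_eq_of_ne (show (some j : Option (Fin Nx)) ≠ none by simp)]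
        have hv'none : v' none = v none + ε := by
          simp [hv'def]
        have hlt : Qt (fun j => v (some j)) < ((v none + ε : ℝ) : EReal) :=
          lt_of_le_of_lt hv (EReal.coe_lt_coe_iff.mpr (by linarith))
        rw [hrec] at hlt
        obtain ⟨vv, hvvmem, hvvlt⟩ := sInf_lt_iff.mp hlt
        obtain ⟨y, p, hy, hfeas, rfl⟩ := hvvmem
        have htop : Qn y ≠ ⊤ := by
          intro h
          rw [h] at hvvlt
          simp only [EReal.add_top_of_ne_bot (EReal.coe_ne_bot _)] at hvvlt
          exact (not_top_lt hvvlt).elim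
        lift Qn y to ℝ using ⟨htop, hbot y⟩ with ρ hρ
        have hlt' : ct ⬝ᵥ p + ρ < v none + ε := by
          rw [← EReal.coe_add] at hvvlt
          exact EReal.coe_lt_coe_iff.mp hvvlt
        show ∃ u : Option (Fin Np) → ℝ, Sum.elim v' u ∈ P
        refine ⟨extendO p ρ, ?_⟩
        rw [hmemP]
        have hxpart : (fun j => Sum.elim v' (extendO p ρ) (Sum.inl (some j)))
            = fun j => v (some j) := by
          funext j
          exact hv'some j
        have hppart : (fun j => Sum.elim v' (extendO p ρ) (Sum.inr (some j))) = p := rfl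
        rw [hxpart, hppart]
        have hyeq : At *ᵥ (fun j => v (some j)) + Bt *ᵥ p + dt = y := hy.symm
        rw [hyeq]
        refine ⟨hfeas, ?_, ?_⟩
        · show Qn y ≤ ((extendO p ρ none : ℝ) : EReal)
          rw [← hρ]
          exact le_refl _
        · show ct ⬝ᵥ p + ρ ≤ v' none
          rw [hv'none]
          exact hlt'.le
      have := hv' i
      rw [map_add, _root_.map_smul, smul_eq_mul] at this
      exact this
    · rintro ⟨u, hu⟩
      rw [hmemP] at hu
      obtain ⟨h1, h2, h3⟩ := hu
      have hxpart : (fun j => Sum.elim v u (Sum.inl (some j))) = fun j => v (some j) := rfl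
      have hppart : (fun j => Sum.elim v u (Sum.inr (some j))) = fun j => u (some j) := rfl
      rw [hxpart, hppart] at h1 h2
      rw [hrec]
      set x : Fin Nx → ℝ := fun j => v (some j) with hx
      set p : Fin Np → ℝ := fun j => u (some j) with hp
      set y : Fin Nx → ℝ := At *ᵥ x + Bt *ᵥ p + dt with hy
      have hmem : ((ct ⬝ᵥ p : ℝ) : EReal) + Qn y ∈ { v : EReal | ∃ (y' : Fin Nx → ℝ)
          (p' : Fin Np → ℝ), y' = At *ᵥ x + Bt *ᵥ p' + dt ∧ et ≤ Et *ᵥ y' + Ft *ᵥ p' ∧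
          v = ((ct ⬝ᵥ p' : ℝ) : EReal) + Qn y' } := ⟨y, p, rfl, h1, rfl⟩
      refine le_trans (sInf_le hmem) ?_
      calc ((ct ⬝ᵥ p : ℝ) : EReal) + Qn y
          ≤ ((ct ⬝ᵥ p : ℝ) : EReal) + ((u none : ℝ) : EReal) := add_le_add (le_refl _) h2
        _ = ((ct ⬝ᵥ p + u none : ℝ) : EReal) := (EReal.coe_add _ _).symm
        _ ≤ ((v none : ℝ) : EReal) := EReal.coe_le_coe_iff.mpr h3
  rw [hmain]
  exact ⟨m, Fs, βs, hSrep⟩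

lemma apply_eq_sum_single {ι : Type} [Fintype ι] [DecidableEq ι] (f : (ι → ℝ) →ₗ[ℝ] ℝ)
    (x : ι → ℝ) : f x = ∑ i, x i • f (Pi.single i 1) := by
  rw [LinearMap.pi_apply_eq_sum_univ]
  apply Finset.sum_congr rfl
  intro j _
  have harg : (fun j_1 => if j = j_1 then (1:ℝ) else 0) = Pi.single j (1:ℝ) := by
    funext k
    rw [Pi.single_apply]
    by_cases h : j = k
    · rw [if_pos h, if_pos h.symm]
    · rw [if_neg h, if_neg (fun hk => h hk.symm)]
  rw [harg]

end

end SDDPAux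

/-- In the deterministic multistage linear program setting, if no
cost-to-go function takes the value `-∞`, then each epigraph
`{(x, r) | Q t x ≤ r}` is a polyhedral subset of `ℝ^Nx × ℝ`, i.e. an intersection of
finitely many closed affine half-spaces; equivalently each `Q t` is piecewise linear. -/
theorem costToGo_epigraph_polyhedral
    (Nx Np T : ℕ) (hT : 1 ≤ T)
    (q : ℕ → ℕ)
    (A : ℕ → Matrix (Fin Nx) (Fin Nx) ℝ)
    (B : ℕ → Matrix (Fin Nx) (Fin Np) ℝ)
    (E : (t : ℕ) → Matrix (Fin (q t)) (Fin Nx) ℝ)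
    (F : (t : ℕ) → Matrix (Fin (q t)) (Fin Np) ℝ)
    (c : ℕ → (Fin Np → ℝ))
    (d : ℕ → (Fin Nx → ℝ))
    (e : (t : ℕ) → (Fin (q t) → ℝ))
    (Q : ℕ → (Fin Nx → ℝ) → EReal)
    (hQfinal : ∀ x, Q (T + 1) x = 0)
    (hQrec : ∀ t, 1 ≤ t → t ≤ T → ∀ x,
      Q t x = sInf { v : EReal | ∃ (y : Fin Nx → ℝ) (p : Fin Np → ℝ),
        y = A (t - 1) *ᵥ x + B t *ᵥ p + d t ∧
        e t ≤ E t *ᵥ y + F t *ᵥ p ∧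
        v = ((c t ⬝ᵥ p : ℝ) : EReal) + Q (t + 1) y })
    (hNoBot : ∀ t, 1 ≤ t → t ≤ T + 1 → ∀ x, Q t x ≠ ⊥) :
    ∀ t, 1 ≤ t → t ≤ T + 1 →
      ∃ (n : ℕ) (a : Fin n → (Fin Nx → ℝ)) (β : Fin n → ℝ) (b : Fin n → ℝ),
        { z : (Fin Nx → ℝ) × ℝ | Q t z.1 ≤ (z.2 : EReal) } =
          ⋂ i : Fin n, { z : (Fin Nx → ℝ) × ℝ | a i ⬝ᵥ z.1 + β i * z.2 ≤ b i } := by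
  classical
  have key : ∀ m t, 1 ≤ t → t + m = T + 1 →
      SDDPAux.IsPoly {w : Option (Fin Nx) → ℝ |
        Q t (fun j => w (some j)) ≤ ((w none : ℝ) : EReal)} := by
    intro m
    induction m with
    | zero =>
      intro t h1 h2
      have ht : t = T + 1 := by omega
      subst ht
      have hset : {w : Option (Fin Nx) → ℝ |
            Q (T + 1) (fun j => w (some j)) ≤ ((w none : ℝ) : EReal)}
          = {w : Option (Fin Nx) → ℝ | ∀ _i : Fin 1,
              (-(LinearMap.proj (none : Option (Fin Nx)) :
                ((Option (Fin Nx) → ℝ) →ₗ[ℝ] ℝ))) w ≤ (0:ℝ)} := by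
        ext w
        simp only [Set.mem_setOf_eq, hQfinal, LinearMap.neg_apply, LinearMap.proj_apply]
        constructor
        · intro h _i
          have h2 : (0:ℝ) ≤ w none := by exact_mod_cast h
          linarith
        · intro h
          have h1' := h 0
          have h2 : (0:ℝ) ≤ w none := by linarith
          exact_mod_cast h2
      rw [hset]
      exact SDDPAux.isPoly_family _ _
    | succ m ih =>
      intro t h1 h2
      have hnext := ih (t + 1) (by omega) (by omega)
      have htT : t ≤ T := by omega
      exact SDDPAux.step_poly Nx Np (q t) (A (t - 1)) (B t) (E t) (F t) (c t) (d t) (e t)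
        (Q t) (Q (t + 1)) (hQrec t h1 htT)
        (fun y => hNoBot (t + 1) (by omega) (by omega) y) hnext
  intro t h1 h2
  obtain ⟨n, f, b, hfb⟩ := key (T + 1 - t) t h1 (by omega)
  refine ⟨n, fun i j => f i (Pi.single (some j) 1), fun i => f i (Pi.single none 1), b, ?_⟩
  ext z
  simp only [Set.mem_setOf_eq, Set.mem_iInter]
  have hz : Q t z.1 ≤ (z.2 : EReal) ↔ ∀ i, f i (SDDPAux.extendO z.1 z.2) ≤ b i := by
    have hmem : (SDDPAux.extendO z.1 z.2) ∈ {w : Option (Fin Nx) → ℝ |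
        Q t (fun j => w (some j)) ≤ ((w none : ℝ) : EReal)} ↔ Q t z.1 ≤ (z.2 : EReal) :=
      Iff.rfl
    rw [← hmem, hfb]
    exact Iff.rfl
  rw [hz]
  apply forall_congr'
  intro i
  have happ : f i (SDDPAux.extendO z.1 z.2)
      = (fun j => f i (Pi.single (some j) 1)) ⬝ᵥ z.1 + f i (Pi.single none 1) * z.2 := by
    rw [SDDPAux.apply_eq_sum_single, Fintype.sum_option]
    simp only [smul_eq_mul, SDDPAux.extendO_some, SDDPAux.extendO_none, dotProduct]
    rw [add_comm]
    congr 1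
    · apply Finset.sum_congr rfl
      intro j _
      ring
    · ring
  rw [happ]
end

section
/- Consider the two-stage example second-stage subproblem with a state-dependent, nonconvex maximum-outflow rule: given initial storage V \in [0, 400] and inflow Y \ge 0, let \psi(V, Y) be the optimal value of minimizing \sum_{g=1}^{4} c_g\, pt_g over pt \in \mathbb{R}^4 and ph \in \mathbb{R}, subject to \sum_{g=1}^{4} pt_g + ph = 400, 0 \le pt_g \le 100 for each g, 0 \le ph \le \min(V + Y, 400), and additionally ph \le 250 if V \le 300 while ph \le 10 + 0.8\,V if V > 300, where c = (100, 200, 300, 400). Define FC_{nc}(V) = (\psi(V, 100) + \psi(V, 0))/2. Then FC_{nc} is NOT a convex function on [0, 400]: it is constant on [250, 300] and strictly decreasing on (300, 400], so there exist V_1 < V_2 < V_3 in [0,400] with FC_{nc}(V_2) > \tfrac{V_3 - V_2}{V_3 - V_1} FC_{nc}(V_1) + \tfrac{V_2 - V_1}{V_3 - V_1} FC_{nc}(V_3). -/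
noncomputable section

/-- Thermal generation unitary costs of the illustrative two-stage example. -/
def cost : Fin 4 → ℝ := ![100, 200, 300, 400]

/-- Optimal value of the second-stage subproblem of the two-stage example with the
state-dependent, nonconvex maximum-outflow rule: `ph ≤ 250` if `V ≤ 300` and
`ph ≤ 10 + 0.8 V` if `V > 300`. -/
def psi (V Y : ℝ) : ℝ :=
  sInf { val : ℝ | ∃ (pt : Fin 4 → ℝ) (ph : ℝ),
    (∑ g, pt g) + ph = 400 ∧
    (∀ g, 0 ≤ pt g ∧ pt g ≤ 100) ∧
    0 ≤ ph ∧ ph ≤ min (V + Y) 400 ∧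
    (V ≤ 300 → ph ≤ 250) ∧
    (300 < V → ph ≤ 10 + 0.8 * V) ∧
    val = ∑ g, cost g * pt g }

/-- Future cost function under the nonconvex state-dependent maximum-outflow rule:
average over the wet (`Y = 100`) and dry (`Y = 0`) equiprobable scenarios. -/
def FCnc (V : ℝ) : ℝ := (psi V 100 + psi V 0) / 2

def cap (V Y : ℝ) : ℝ := min (min (V + Y) 400) (if V ≤ 300 then 250 else 10 + 0.8 * V)

def fhat (T : ℝ) : ℝ := max (100 * T) (200 * T - 10000)

lemma psi_eq (V Y : ℝ) (hc2 : 200 ≤ cap V Y) :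
    psi V Y = fhat (400 - cap V Y) := by
  have hc4 : cap V Y ≤ 400 := le_trans (min_le_left _ _) (min_le_right _ _)
  set H := cap V Y with hHdef
  set T := 400 - H with hT
  have hT0 : 0 ≤ T := by simp only [hT]; linarith
  have hT2 : T ≤ 200 := by simp only [hT]; linarith
  -- lower bound
  have hlb : ∀ x ∈ { val : ℝ | ∃ (pt : Fin 4 → ℝ) (ph : ℝ),
      (∑ g, pt g) + ph = 400 ∧
      (∀ g, 0 ≤ pt g ∧ pt g ≤ 100) ∧
      0 ≤ ph ∧ ph ≤ min (V + Y) 400 ∧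
      (V ≤ 300 → ph ≤ 250) ∧
      (300 < V → ph ≤ 10 + 0.8 * V) ∧
      val = ∑ g, cost g * pt g }, fhat T ≤ x := by
    rintro x ⟨pt, ph, hsum, hb, hph0, hph1, hr1, hr2, hval⟩
    have hphH : ph ≤ H := by
      rw [hHdef, cap]
      refine le_min hph1 ?_
      by_cases h : V ≤ 300
      · rw [if_pos h]; exact hr1 h
      · rw [if_neg h]; exact hr2 (not_le.1 h)
    simp only [Fin.sum_univ_four] at hsum
    simp only [cost, Fin.sum_univ_four, Matrix.cons_val_zero, Matrix.cons_val_one,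
      Matrix.head_cons, Matrix.cons_val_two, Matrix.tail_cons, Matrix.cons_val_three] at hval
    have h0 := hb 0
    have h1 := hb 1
    have h2 := hb 2
    have h3 := hb 3
    have hS : T ≤ pt 0 + pt 1 + pt 2 + pt 3 := by simp only [hT]; linarith
    refine max_le ?_ ?_ <;> nlinarith [h0.1, h1.1, h2.1, h3.1, h0.2, h1.2, h2.2, h3.2]
  -- witness
  have hmem : fhat T ∈ { val : ℝ | ∃ (pt : Fin 4 → ℝ) (ph : ℝ),
      (∑ g, pt g) + ph = 400 ∧
      (∀ g, 0 ≤ pt g ∧ pt g ≤ 100) ∧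
      0 ≤ ph ∧ ph ≤ min (V + Y) 400 ∧
      (V ≤ 300 → ph ≤ 250) ∧
      (300 < V → ph ≤ 10 + 0.8 * V) ∧
      val = ∑ g, cost g * pt g } := by
    refine ⟨![min T 100, T - min T 100, 0, 0], H, ?_, ?_, by linarith, ?_, ?_, ?_, ?_⟩
    · simp only [Fin.sum_univ_four, Matrix.cons_val_zero, Matrix.cons_val_one, Matrix.head_cons,
        Matrix.cons_val_two, Matrix.tail_cons, Matrix.cons_val_three]
      linarith
    · intro g
      have hm1 : (0:ℝ) ≤ min T 100 := le_min hT0 (by norm_num)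
      have hm2 : min T 100 ≤ 100 := min_le_right _ _
      have hm3 : min T 100 ≤ T := min_le_left _ _
      have hm4 : T - min T 100 ≤ 100 := by
        rcases le_total T 100 with h | h
        · rw [min_eq_left h]; linarith
        · rw [min_eq_right h]; linarith
      fin_cases g
      · exact ⟨hm1, hm2⟩
      · exact ⟨sub_nonneg.2 hm3, hm4⟩
      · exact ⟨le_refl 0, by norm_num⟩
      · exact ⟨le_refl 0, by norm_num⟩
    · exact min_le_left _ _
    · intro h; have : H ≤ (if V ≤ 300 then 250 else 10 + 0.8 * V) := min_le_right _ _
      rwa [if_pos h] at this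
    · intro h; have : H ≤ (if V ≤ 300 then 250 else 10 + 0.8 * V) := min_le_right _ _
      rwa [if_neg (not_le.2 h)] at this
    · simp only [cost, Fin.sum_univ_four, Matrix.cons_val_zero, Matrix.cons_val_one,
        Matrix.head_cons, Matrix.cons_val_two, Matrix.tail_cons, Matrix.cons_val_three]
      rcases le_total T 100 with h | h
      · rw [min_eq_left h, fhat, max_eq_left (by linarith)]; ring
      · rw [min_eq_right h, fhat, max_eq_right (by linarith)]; ring
  rw [psi]
  exact le_antisymm (csInf_le ⟨fhat T, hlb⟩ hmem) (le_csInf ⟨fhat T, hmem⟩ hlb)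

lemma cap_mid_wet (V : ℝ) (h1 : 250 ≤ V) (h2 : V ≤ 300) : cap V 100 = 250 := by
  rw [cap, if_pos h2, min_eq_right (le_min (by linarith) (by norm_num))]

lemma cap_mid_dry (V : ℝ) (h1 : 250 ≤ V) (h2 : V ≤ 300) : cap V 0 = 250 := by
  rw [cap, if_pos h2, min_eq_right (le_min (by linarith) (by norm_num))]

lemma cap_high_wet (V : ℝ) (h1 : 300 < V) (h2 : V ≤ 400) : cap V 100 = 10 + 0.8 * V := by
  rw [cap, if_neg (not_le.2 h1), min_eq_right (le_min (by linarith) (by linarith))]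

lemma cap_high_dry (V : ℝ) (h1 : 300 < V) (h2 : V ≤ 400) : cap V 0 = 10 + 0.8 * V := by
  rw [cap, if_neg (not_le.2 h1)]
  rw [min_eq_right (le_min (by linarith) (by linarith))]

lemma FCnc_mid (V : ℝ) (h1 : 250 ≤ V) (h2 : V ≤ 300) : FCnc V = 20000 := by
  rw [FCnc, psi_eq V 100 (by rw [cap_mid_wet V h1 h2]; norm_num),
    psi_eq V 0 (by rw [cap_mid_dry V h1 h2]; norm_num),
    cap_mid_wet V h1 h2, cap_mid_dry V h1 h2]
  norm_num [fhat]

lemma FCnc_high (V : ℝ) (h1 : 300 < V) (h2 : V ≤ 400) : FCnc V = fhat (390 - 0.8 * V) := by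
  rw [FCnc, psi_eq V 100 (by rw [cap_high_wet V h1 h2]; linarith),
    psi_eq V 0 (by rw [cap_high_dry V h1 h2]; linarith),
    cap_high_wet V h1 h2, cap_high_dry V h1 h2]
  ring_nf

lemma fhat_mono {a b : ℝ} (h : a < b) : fhat a < fhat b := by
  rw [fhat, fhat]
  exact max_lt (lt_of_lt_of_le (by linarith) (le_max_left _ _))
    (lt_of_lt_of_le (by linarith) (le_max_right _ _))

example : True := trivial

/-- The nonconvex state-dependent maximum-outflow rule makes the future
cost function nonconvex on `[0, 400]`: it is constant on `[250, 300]` and strictly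
decreasing on `(300, 400]`, so there are points `V₁ < V₂ < V₃` in `[0, 400]` at which
`FCnc` lies strictly above the corresponding chord. -/
theorem nonconvex_max_outflow_makes_FC_nonconvex :
    ¬ ConvexOn ℝ (Set.Icc (0 : ℝ) 400) FCnc ∧
    (∀ V ∈ Set.Icc (250 : ℝ) 300, FCnc V = FCnc 250) ∧
    (∀ V₁ V₂ : ℝ, 300 < V₁ → V₁ < V₂ → V₂ ≤ 400 → FCnc V₂ < FCnc V₁) ∧
    ∃ V₁ V₂ V₃ : ℝ, V₁ ∈ Set.Icc (0 : ℝ) 400 ∧ V₂ ∈ Set.Icc (0 : ℝ) 400 ∧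
      V₃ ∈ Set.Icc (0 : ℝ) 400 ∧ V₁ < V₂ ∧ V₂ < V₃ ∧
      ((V₃ - V₂) / (V₃ - V₁)) * FCnc V₁ + ((V₂ - V₁) / (V₃ - V₁)) * FCnc V₃ < FCnc V₂ := by
  have h250 : FCnc 250 = 20000 := FCnc_mid 250 (by norm_num) (by norm_num)
  have h300 : FCnc 300 = 20000 := FCnc_mid 300 (by norm_num) (by norm_num)
  have h400 : FCnc 400 = 7000 := by
    rw [FCnc_high 400 (by norm_num) le_rfl]
    norm_num [fhat]
  have hmid : ∀ V ∈ Set.Icc (250:ℝ) 300, FCnc V = FCnc 250 := by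
    intro V hV; rw [FCnc_mid V hV.1 hV.2, h250]
  have hdec : ∀ V₁ V₂ : ℝ, 300 < V₁ → V₁ < V₂ → V₂ ≤ 400 → FCnc V₂ < FCnc V₁ := by
    intro V₁ V₂ h1 h2 h3
    rw [FCnc_high V₁ h1 (by linarith), FCnc_high V₂ (by linarith) h3]
    exact fhat_mono (by linarith)
  refine ⟨?_, hmid, hdec, 250, 300, 400, ⟨by norm_num, by norm_num⟩, ⟨by norm_num, by norm_num⟩,
    ⟨by norm_num, by norm_num⟩, by norm_num, by norm_num,
    by rw [h250, h300, h400]; norm_num⟩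
  intro hconv
  have hmem1 : (250:ℝ) ∈ Set.Icc (0:ℝ) 400 := by norm_num
  have hmem2 : (400:ℝ) ∈ Set.Icc (0:ℝ) 400 := by norm_num
  have key := hconv.2 hmem1 hmem2 (by norm_num : (0:ℝ) ≤ 2/3) (by norm_num : (0:ℝ) ≤ 1/3)
    (by norm_num : (2/3:ℝ) + 1/3 = 1)
  rw [show (2/3 : ℝ) • (250:ℝ) + (1/3 : ℝ) • (400:ℝ) = 300 by norm_num] at key
  rw [h250, h300, h400, smul_eq_mul, smul_eq_mul] at key
  norm_num at key
end
end
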